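/- Let H be a complex Hilbert space of finite dimension N. Then every random unitary map on End(H) can be written as a convex combination of at most N⁴ − 2N² + 2 unitary conjugations; that is, for every 𝔘 in the convex hull of {A ↦ V A V* : V unitary on H} there exist m ≤ (N²−1)² + 1 unitary operators V_1, …, V_m and nonnegative reals p_1, …, p_m with Σ p_k = 1 such that 𝔘(A) = Σ_{k=1}^m p_k V_k A V_k* for all A ∈ End(H). -/

import Mathlib

/-!
A point of the convex hull of `s` is a convex combination of affinely independent points of `s`
(Carathéodory), hence of at most `dim (vectorSpan s) + 1` of them. A difference `Φ` of two unitary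
conjugations kills `1` and maps the real space `T₀` of traceless selfadjoint operators, of
dimension `N² - 1`, into itself. Since every selfadjoint operator is a real multiple of `1` plus
an element of `T₀`, and selfadjoint operators span `End(H)` over `ℂ`, such a `Φ` is determined by
its restriction to `T₀`; so the vectorSpan of the unitary conjugations has dimension at most
`(N² - 1)²`.
-/

/-- Conjugation `A ↦ V A V*` by an operator `V`, as a continuous linear map on `End(H)`. -/
noncomputable def conjCLM {H : Type*} [NormedAddCommGroup H] [InnerProductSpace ℂ H]
    [FiniteDimensional ℂ H] (V : H →L[ℂ] H) :
    (H →L[ℂ] H) →L[ℂ] (H →L[ℂ] H) :=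
  ContinuousLinearMap.mulLeftRight ℂ (H →L[ℂ] H) V (star V)

open Module ComplexStarModule

theorem exists_fin_convexCombination_le_finrank_vectorSpan_add_one
    {𝕜 E : Type*} [Field 𝕜] [LinearOrder 𝕜] [IsStrictOrderedRing 𝕜] [AddCommGroup E]
    [Module 𝕜 E] {s : Set E} [FiniteDimensional 𝕜 (vectorSpan 𝕜 s)] {x : E}
    (hx : x ∈ convexHull 𝕜 s) :
    ∃ m ≤ finrank 𝕜 (vectorSpan 𝕜 s) + 1, ∃ (z : Fin m → E) (w : Fin m → 𝕜),
      (∀ k, z k ∈ s) ∧ (∀ k, 0 ≤ w k) ∧ ∑ k, w k = 1 ∧ ∑ k, w k • z k = x := by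
  obtain ⟨ι, _, z, w, hzs, hz, hw0, hw1, hwz⟩ := eq_pos_convex_span_of_mem_convexHull hx
  have hcard : Fintype.card ι ≤ finrank 𝕜 (vectorSpan 𝕜 s) + 1 := by
    grw [hz.card_le_finrank_succ, Submodule.finrank_mono (vectorSpan_mono 𝕜 hzs)]
  let e := Fintype.equivFin ι
  refine ⟨_, hcard, z ∘ e.symm, w ∘ e.symm, fun _ => hzs ⟨_, rfl⟩, fun _ => (hw0 _).le, ?_, ?_⟩
  · rw [← hw1, ← e.symm.sum_comp]; rfl
  · rw [← hwz, ← e.symm.sum_comp]; rfl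

theorem finrank_selfAdjoint_submodule {A : Type*} [AddCommGroup A] [Module ℂ A]
    [StarAddMonoid A] [StarModule ℂ A] [FiniteDimensional ℂ A] :
    finrank ℝ (selfAdjoint.submodule ℝ A) = finrank ℂ A := by
  have h := LinearMap.finrank_range_add_finrank_ker (imaginaryPart (A := A))
  rw [LinearMap.range_eq_top.mpr imaginaryPart_surjective, finrank_top, ker_imaginaryPart,
    finrank_real_of_complex] at h
  change finrank ℝ (selfAdjoint.submodule ℝ A) + _ = _ at h
  omega

section Trace

variable {E : Type*} [NormedAddCommGroup E] [NormedSpace ℂ E]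

noncomputable def opTrace : (E →L[ℂ] E) →ₗ[ℂ] ℂ :=
  (LinearMap.trace ℂ E).comp (ContinuousLinearMap.coeLM ℂ)

theorem opTrace_mul_comm (A B : E →L[ℂ] E) : opTrace (A * B) = opTrace (B * A) :=
  LinearMap.trace_mul_comm ℂ (A : E →ₗ[ℂ] E) B

theorem opTrace_one [FiniteDimensional ℂ E] : opTrace (1 : E →L[ℂ] E) = finrank ℂ E :=
  LinearMap.trace_one ℂ E

end Trace

section Operators

variable {H : Type*} [NormedAddCommGroup H] [InnerProductSpace ℂ H] [FiniteDimensional ℂ H]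

theorem finrank_continuousLinearMap_self : finrank ℂ (H →L[ℂ] H) = finrank ℂ H ^ 2 := by
  rw [← LinearMap.toContinuousLinearMap.finrank_eq, finrank_linearMap, sq]

theorem opTrace_conj {V : H →L[ℂ] H} (hV : V ∈ unitary (H →L[ℂ] H)) (A : H →L[ℂ] H) :
    opTrace (V * A * star V) = opTrace A := by
  rw [opTrace_mul_comm, ← mul_assoc, Unitary.star_mul_self_of_mem hV, one_mul]

/-- Selfadjoint operators have real trace, so constraining only its real part loses nothing and
keeps the defining functional `ℝ`-linear. -/
noncomputable def tracelessSelfAdjoint : Submodule ℝ (H →L[ℂ] H) :=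
  selfAdjoint.submodule ℝ (H →L[ℂ] H) ⊓ LinearMap.ker (Complex.reLm ∘ₗ opTrace.restrictScalars ℝ)

theorem mem_tracelessSelfAdjoint {A : H →L[ℂ] H} :
    A ∈ tracelessSelfAdjoint ↔ IsSelfAdjoint A ∧ (opTrace A).re = 0 := Iff.rfl

theorem finrank_tracelessSelfAdjoint_le :
    finrank ℝ (tracelessSelfAdjoint (H := H)) ≤ finrank ℂ H ^ 2 - 1 := by
  have hsa : finrank ℝ (selfAdjoint.submodule ℝ (H →L[ℂ] H)) = finrank ℂ H ^ 2 := by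
    rw [finrank_selfAdjoint_submodule, finrank_continuousLinearMap_self]
  have hle : finrank ℝ (tracelessSelfAdjoint (H := H)) ≤
      finrank ℝ (selfAdjoint.submodule ℝ (H →L[ℂ] H)) := Submodule.finrank_mono inf_le_left
  rcases eq_or_ne (finrank ℂ H) 0 with hN | hN
  · simpa [hsa, hN] using hle
  · have hone : (1 : H →L[ℂ] H) ∉ tracelessSelfAdjoint := fun h =>
      hN <| by simpa [opTrace_one] using (mem_tracelessSelfAdjoint.mp h).2
    have hlt : finrank ℝ (tracelessSelfAdjoint (H := H)) <
        finrank ℝ (selfAdjoint.submodule ℝ (H →L[ℂ] H)) := Submodule.finrank_lt_finrank_of_lt <|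
      SetLike.lt_iff_le_and_exists.mpr ⟨inf_le_left, 1, IsSelfAdjoint.one _, hone⟩
    exact Nat.le_sub_one_of_lt (hsa ▸ hlt)

theorem eq_zero_of_map_one_of_tracelessSelfAdjoint
    {Φ : (H →L[ℂ] H) →L[ℂ] (H →L[ℂ] H)} (h1 : Φ 1 = 0)
    (hT : ∀ A ∈ tracelessSelfAdjoint, Φ A = 0) : Φ = 0 := by
  have hsa : ∀ A : H →L[ℂ] H, IsSelfAdjoint A → Φ A = 0 := by
    intro A hA
    rcases eq_or_ne (finrank ℂ H) 0 with hN | hN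
    · have : Subsingleton H := finrank_zero_iff.mp hN
      rw [Subsingleton.elim A 0, map_zero]
    · have hmem : (finrank ℂ H : ℝ) • A - (opTrace A).re • 1 ∈ tracelessSelfAdjoint := by
        refine mem_tracelessSelfAdjoint.mpr
          ⟨.sub (.smul (.all _) hA) (.smul (.all _) (.one _)), ?_⟩
        rw [map_sub, opTrace.map_smul_of_tower, opTrace.map_smul_of_tower, opTrace_one]
        simp [mul_comm]
      have hzero := hT _ hmem
      rw [map_sub, Φ.map_smul_of_tower, Φ.map_smul_of_tower, h1, smul_zero, sub_zero,
        smul_eq_zero] at hzero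
      exact hzero.resolve_left (by exact_mod_cast hN)
  ext1 A
  rw [← realPart_add_I_smul_imaginaryPart A, map_add, map_smul, hsa _ (ℜ A).2, hsa _ (ℑ A).2,
    smul_zero, add_zero, zero_apply]

noncomputable def tracelessCompatibleMaps :
    Submodule ℝ ((H →L[ℂ] H) →L[ℂ] (H →L[ℂ] H)) where
  carrier := {Φ | Φ 1 = 0 ∧ ∀ A ∈ tracelessSelfAdjoint, Φ A ∈ tracelessSelfAdjoint}
  add_mem' := fun ⟨h1, hT⟩ ⟨g1, gT⟩ =>
    ⟨by simp [h1, g1], fun A hA => add_mem (hT A hA) (gT A hA)⟩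
  zero_mem' := ⟨rfl, fun _ _ => zero_mem _⟩
  smul_mem' := fun c _ ⟨h1, hT⟩ =>
    ⟨by simp [h1], fun A hA => Submodule.smul_mem _ c (hT A hA)⟩

noncomputable def restrictTracelessSelfAdjoint :
    tracelessCompatibleMaps (H := H) →ₗ[ℝ] Module.End ℝ (tracelessSelfAdjoint (H := H)) where
  toFun Φ := ((Φ : (H →L[ℂ] H) →L[ℂ] (H →L[ℂ] H)).toLinearMap.restrictScalars ℝ).restrict Φ.2.2
  map_add' _ _ := rfl
  map_smul' _ _ := rfl

theorem restrictTracelessSelfAdjoint_injective :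
    Function.Injective (restrictTracelessSelfAdjoint (H := H)) := by
  refine (injective_iff_map_eq_zero _).mpr fun Φ hΦ => Subtype.ext ?_
  exact eq_zero_of_map_one_of_tracelessSelfAdjoint Φ.2.1 fun A hA =>
    congr_arg Subtype.val (LinearMap.congr_fun hΦ ⟨A, hA⟩)

theorem finrank_tracelessCompatibleMaps_le :
    finrank ℝ (tracelessCompatibleMaps (H := H)) ≤ (finrank ℂ H ^ 2 - 1) ^ 2 :=
  calc finrank ℝ (tracelessCompatibleMaps (H := H))
      ≤ finrank ℝ (Module.End ℝ (tracelessSelfAdjoint (H := H))) :=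
        LinearMap.finrank_le_finrank_of_injective restrictTracelessSelfAdjoint_injective
    _ = finrank ℝ (tracelessSelfAdjoint (H := H)) ^ 2 := by rw [finrank_linearMap, sq]
    _ ≤ (finrank ℂ H ^ 2 - 1) ^ 2 := Nat.pow_le_pow_left finrank_tracelessSelfAdjoint_le 2

theorem conjCLM_apply (V A : H →L[ℂ] H) : conjCLM V A = V * A * star V := rfl

theorem conjCLM_mem_tracelessSelfAdjoint {V A : H →L[ℂ] H} (hV : V ∈ unitary (H →L[ℂ] H))
    (hA : A ∈ tracelessSelfAdjoint) : conjCLM V A ∈ tracelessSelfAdjoint :=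
  ⟨hA.1.conjugate V, by simpa [conjCLM_apply, opTrace_conj hV] using hA.2⟩

theorem conjCLM_sub_conjCLM_mem_tracelessCompatibleMaps {V W : H →L[ℂ] H}
    (hV : V ∈ unitary (H →L[ℂ] H)) (hW : W ∈ unitary (H →L[ℂ] H)) :
    conjCLM V - conjCLM W ∈ tracelessCompatibleMaps :=
  ⟨by simp [conjCLM_apply, Unitary.mul_star_self_of_mem hV, Unitary.mul_star_self_of_mem hW],
    fun _ hA => sub_mem (conjCLM_mem_tracelessSelfAdjoint hV hA)
      (conjCLM_mem_tracelessSelfAdjoint hW hA)⟩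

theorem vectorSpan_unitaryConj_le :
    vectorSpan ℝ {T | ∃ V ∈ unitary (H →L[ℂ] H), T = conjCLM V} ≤ tracelessCompatibleMaps := by
  rw [vectorSpan_def, Submodule.span_le]
  rintro _ ⟨_, ⟨V, hV, rfl⟩, _, ⟨W, hW, rfl⟩, rfl⟩
  exact conjCLM_sub_conjCLM_mem_tracelessCompatibleMaps hV hW

end Operators

/-- Every random unitary map on `End(H)`, `dim H = N`, is a convex
combination of at most `N⁴ − 2N² + 2 = (N²−1)² + 1` unitary conjugations. -/
theorem random_unitary_caratheodory_bound
    {H : Type*} [NormedAddCommGroup H] [InnerProductSpace ℂ H] [FiniteDimensional ℂ H]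
    (𝔘 : (H →L[ℂ] H) →L[ℂ] (H →L[ℂ] H))
    (h𝔘 : 𝔘 ∈ convexHull ℝ {T | ∃ V ∈ unitary (H →L[ℂ] H), T = conjCLM V}) :
    ∃ m : ℕ, m ≤ ((Module.finrank ℂ H) ^ 2 - 1) ^ 2 + 1 ∧
      ∃ (V : Fin m → (H →L[ℂ] H)) (p : Fin m → ℝ),
        (∀ k, V k ∈ unitary (H →L[ℂ] H)) ∧ (∀ k, 0 ≤ p k) ∧ (∑ k, p k = 1) ∧
        ∀ A : H →L[ℂ] H, 𝔘 A = ∑ k, p k • (V k * A * star (V k)) := by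
  have : FiniteDimensional ℝ ((H →L[ℂ] H) →L[ℂ] (H →L[ℂ] H)) := .complexToReal _
  obtain ⟨m, hm, T, p, hT, hp0, hp1, hTp⟩ :=
    exists_fin_convexCombination_le_finrank_vectorSpan_add_one h𝔘
  choose V hV hTV using hT
  refine ⟨m, hm.trans ?_, V, p, hV, hp0, hp1, fun A => ?_⟩
  · grw [Submodule.finrank_mono vectorSpan_unitaryConj_le, finrank_tracelessCompatibleMaps_le]
  · simp [← hTp, hTV, conjCLM_apply]
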